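/- Let (V, B) be a finite-dimensional symmetric bilinear space over a field F of characteristic 2 admitting a totally isotropic subspace of half the dimension. Then V has a basis with respect to which the Gram matrix of B has block form [[0, I], [I, A]] for some symmetric matrix A. -/

import Mathlib

/-!
Take a basis `e` of `W` and vectors `f i` with `B (f i) (e k) = δᵢₖ`; they exist because every
functional on `W` extends to `V` and is represented by the nondegenerate form `B`. As `W` is
isotropic, the Gram matrix of `(e, f)` is `[[0, I], [I, A]]` with `A = (B (f i) (f j))`, which is
invertible, so `(e, f)` is linearly independent; having `2 dim W = dim V` members, it is a basis.
-/

open Matrix Module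

namespace LinearMap.BilinForm

section CommRing

variable {R M ι : Type*} [CommRing R] [AddCommGroup M] [Module R M]

def gramMatrix (B : LinearMap.BilinForm R M) (v : ι → M) : Matrix ι ι R :=
  Matrix.of fun i j => B (v i) (v j)

theorem toMatrix_eq_gramMatrix [Fintype ι] [DecidableEq ι] (B : LinearMap.BilinForm R M)
    (b : Basis ι R M) : toMatrix b B = B.gramMatrix b := by
  ext i j
  exact toMatrix_apply b B i j

theorem linearIndependent_of_isUnit_gramMatrix [Fintype ι] [DecidableEq ι]
    {B : LinearMap.BilinForm R M} {v : ι → M} (h : IsUnit (B.gramMatrix v)) :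
    LinearIndependent R v := by
  rw [Fintype.linearIndependent_iff]
  intro c hc
  have hvecMul : c ᵥ* B.gramMatrix v = 0 := by
    ext j
    simpa [vecMul, dotProduct, gramMatrix, mul_comm] using congrArg (B · (v j)) hc
  exact congrFun (vecMul_injective_of_isUnit h (hvecMul.trans (zero_vecMul _).symm))

theorem gramMatrix_sumElim [DecidableEq ι] {B : LinearMap.BilinForm R M}
    (hsymm : ∀ x y, B x y = B y x) {e f : ι → M} (he : ∀ i k, B (e i) (e k) = 0)
    (hef : ∀ i k, B (f i) (e k) = (1 : Matrix ι ι R) i k) :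
    B.gramMatrix (Sum.elim e f) = fromBlocks 0 1 1 (B.gramMatrix f) := by
  ext (i | i) (k | k)
  · exact he i k
  · rw [gramMatrix, of_apply, Sum.elim_inl, Sum.elim_inr, hsymm, hef, fromBlocks_apply₁₂,
      one_apply, one_apply]
    exact if_congr eq_comm rfl rfl
  · exact hef i k
  · rfl

end CommRing

section Field

variable {K V ι : Type*} [Field K] [AddCommGroup V] [Module K V] [FiniteDimensional K V]
  {B : LinearMap.BilinForm K V}

theorem exists_apply_eq_dual_of_injective (hB : Function.Injective B) {W : Submodule K V}
    (φ : Dual K W) : ∃ v : V, ∀ w : W, B v w = φ w := by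
  have hBsurj : Function.Surjective B :=
    (injective_iff_surjective_of_finrank_eq_finrank Subspace.dual_finrank_eq.symm).mp hB
  obtain ⟨ψ, rfl⟩ := dualMap_surjective_of_injective W.injective_subtype φ
  obtain ⟨v, rfl⟩ := hBsurj ψ
  exact ⟨v, fun _ => rfl⟩

theorem exists_dualFamily_of_injective [DecidableEq ι] (hB : Function.Injective B)
    {W : Submodule K V} (e : Basis ι K W) :
    ∃ f : ι → V, ∀ i k, B (f i) (e k) = (1 : Matrix ι ι K) i k := by
  choose f hf using fun i => exists_apply_eq_dual_of_injective hB (e.coord i)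
  refine ⟨f, fun i k => ?_⟩
  rw [hf, Basis.coord_apply, Basis.repr_self, Finsupp.single_apply, one_apply]
  exact if_congr eq_comm rfl rfl

end Field

end LinearMap.BilinForm

theorem Matrix.isUnit_fromBlocks_zero_one_one {R ι : Type*} [CommRing R] [Fintype ι]
    [DecidableEq ι] (A : Matrix ι ι R) :
    IsUnit (fromBlocks 0 1 1 A : Matrix (ι ⊕ ι) (ι ⊕ ι) R) := by
  refine IsUnit.of_mul_eq_one (fromBlocks (-A) 1 1 0) ?_
  simp [fromBlocks_multiply, ← fromBlocks_one]

theorem exists_basis_gram_fromBlocks_general (F : Type*) [Field F]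
    (V : Type*) [AddCommGroup V] [Module F V] [FiniteDimensional F V]
    (B : LinearMap.BilinForm F V)
    (hsymm : ∀ x y : V, B x y = B y x)
    (hnd : Function.Injective fun v : V => B v)
    (W : Submodule F V)
    (hiso : ∀ w ∈ W, ∀ w' ∈ W, B w w' = 0)
    (hdim : 2 * Module.finrank F W = Module.finrank F V) :
    ∃ (n : ℕ) (b : Module.Basis (Fin n ⊕ Fin n) F V) (A : Matrix (Fin n) (Fin n) F),
      A.IsSymm ∧ BilinForm.toMatrix b B = Matrix.fromBlocks 0 1 1 A := by
  let e := Module.finBasis F W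
  obtain ⟨f, hf⟩ := B.exists_dualFamily_of_injective hnd e
  let g : Fin _ ⊕ Fin _ → V := Sum.elim (fun i => e i) f
  have hgram : B.gramMatrix g = fromBlocks 0 1 1 (B.gramMatrix f) :=
    B.gramMatrix_sumElim hsymm (fun i k => hiso _ (e i).2 _ (e k).2) hf
  have hli : LinearIndependent F g := LinearMap.BilinForm.linearIndependent_of_isUnit_gramMatrix
    (hgram ▸ isUnit_fromBlocks_zero_one_one _)
  let b := basisOfLinearIndependentOfCardEqFinrank' g hli (by simp [← hdim, two_mul])
  refine ⟨_, b, B.gramMatrix f, IsSymm.ext fun i j => hsymm (f j) (f i), ?_⟩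
  refine (B.toMatrix_eq_gramMatrix b).trans ?_
  rw [coe_basisOfLinearIndependentOfCardEqFinrank', hgram]

/-- A metabolic nondegenerate symmetric bilinear form over a field of characteristic 2
has a basis in which its Gram matrix has block form `[[0, I], [I, A]]` with `A` symmetric. -/
theorem exists_basis_gram_fromBlocks (F : Type*) [Field F] [CharP F 2]
    (V : Type*) [AddCommGroup V] [Module F V] [FiniteDimensional F V]
    (B : LinearMap.BilinForm F V)
    (hsymm : ∀ x y : V, B x y = B y x)
    (hnd : Function.Injective fun v : V => B v)
    (W : Submodule F V)
    (hiso : ∀ w ∈ W, ∀ w' ∈ W, B w w' = 0)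
    (hdim : 2 * Module.finrank F W = Module.finrank F V) :
    ∃ (n : ℕ) (b : Module.Basis (Fin n ⊕ Fin n) F V) (A : Matrix (Fin n) (Fin n) F),
      A.IsSymm ∧ BilinForm.toMatrix b B = Matrix.fromBlocks 0 1 1 A :=
  exists_basis_gram_fromBlocks_general F V B hsymm hnd W hiso hdim
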